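/- In a totally ordered abelian group G, given two grids J^{μ,m} and J^{ν,n} (with μ, ν finite sets of elements strictly less than 1), there exists a third grid J^{α,p} containing both. -/

import Mathlib

/-- The grid `J^{μ,m}`: all products `∏ μᵢ^{cᵢ}` with `cᵢ ≥ mᵢ`. -/
def grid {G : Type*} [CommGroup G] {k : ℕ} (μ : Fin k → G) (m : Fin k → ℤ) : Set G :=
  {h | ∃ c : Fin k → ℤ, (∀ i, m i ≤ c i) ∧ h = ∏ i, μ i ^ c i}

section Grid

variable {G : Type*} [CommGroup G] {k l : ℕ}

theorem grid_mono (μ : Fin k → G) {m m' : Fin k → ℤ} (h : m' ≤ m) : grid μ m ⊆ grid μ m' := by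
  rintro x ⟨c, hc, rfl⟩
  exact ⟨c, fun i => (h i).trans (hc i), rfl⟩

theorem one_mem_grid (μ : Fin k → G) {m : Fin k → ℤ} (h : m ≤ 0) : 1 ∈ grid μ m :=
  ⟨0, h, by simp⟩

theorem mul_mem_grid_append {μ : Fin k → G} {m : Fin k → ℤ} {ν : Fin l → G} {n : Fin l → ℤ}
    {x y : G} (hx : x ∈ grid μ m) (hy : y ∈ grid ν n) :
    x * y ∈ grid (Fin.append μ ν) (Fin.append m n) := by
  obtain ⟨c, hc, rfl⟩ := hx
  obtain ⟨d, hd, rfl⟩ := hy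
  refine ⟨Fin.append c d, (Fin.forall_fin_add _).2 ⟨?_, ?_⟩, ?_⟩
  · simpa using hc
  · simpa using hd
  · simp [Fin.prod_univ_add]

end Grid

/-- Given two grids, there is a third grid containing them both. -/
theorem stmt1 {G : Type*} [CommGroup G] [LinearOrder G] [IsOrderedMonoid G]
    {k l : ℕ} (μ : Fin k → G) (m : Fin k → ℤ) (ν : Fin l → G) (n : Fin l → ℤ)
    (hμ : ∀ i, μ i < 1) (hν : ∀ i, ν i < 1) :
    ∃ (r : ℕ) (α : Fin r → G) (p : Fin r → ℤ),
      (∀ i, α i < 1) ∧ grid μ m ⊆ grid α p ∧ grid ν n ⊆ grid α p := by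
  refine ⟨k + l, Fin.append μ ν, Fin.append (m ⊓ 0) (n ⊓ 0),
    (Fin.forall_fin_add _).2 ⟨by simpa using hμ, by simpa using hν⟩, ?_, ?_⟩
  · intro x hx
    simpa using mul_mem_grid_append (grid_mono μ inf_le_left hx) (one_mem_grid ν inf_le_right)
  · intro y hy
    simpa using mul_mem_grid_append (one_mem_grid μ inf_le_right) (grid_mono ν inf_le_left hy)
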